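/- arXiv:1205.0778 — 3 statements merged into one kernel-verified Lean document; each statement's English description precedes it below -/
import Mathlib

section
/- Let L be a Lie algebra over a field F and let N be a nilpotent ideal of L. Denote by A the associative subalgebra of End_F(L) generated by ad(L), where ad: L → gl(L) is the adjoint representation, (ad a)(b) = [a,b]. Then ad(N) ⊆ J(A), the Jacobson radical of A. -/
/-!
For an ideal `N` of `L` the terms `N.lcs L j = [N, [N, …, [N, L]]]` of the lower central series
of `L` as an `N`-module are ideals of `L`, hence invariant under every element `y` of the
associative algebra `A` generated by `ad L`, while `ad n` for `n ∈ N` moves each term into the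
next one. So `(y * ad n) ^ j` maps `L` into `N.lcs L j`, which vanishes for large `j` because `N`
is nilpotent. Every element of the left ideal `A * ad n` being nilpotent, `ad n` lies in `J(A)`.
-/

open LieModule

theorem Ideal.mem_jacobson_bot_of_forall_isNilpotent_mul {R : Type*} [Ring R] {x : R}
    (h : ∀ y, IsNilpotent (y * x)) : x ∈ (⊥ : Ideal R).jacobson := by
  refine Ideal.mem_jacobson_iff.mpr fun y => ?_
  obtain ⟨u, hu⟩ := (h y).isUnit_add_one
  refine ⟨↑u⁻¹, (Submodule.mem_bot R).mpr ?_⟩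
  calc ↑u⁻¹ * y * x + ↑u⁻¹ - 1 = ↑u⁻¹ * (y * x + 1) - 1 := by rw [mul_add, mul_one, mul_assoc]
    _ = 0 := by rw [← hu, Units.inv_mul, sub_self]

section LieModule

variable {R L M : Type*} [CommRing R] [LieRing L] [LieAlgebra R L]
  [AddCommGroup M] [Module R M] [LieRingModule L M] [LieModule R L M]

theorem LieSubmodule.mapsTo_of_mem_adjoin_range_toEnd (N : LieSubmodule R L M)
    {f : Module.End R M} (hf : f ∈ Algebra.adjoin R (Set.range (toEnd R L M))) :
    Set.MapsTo f N N := by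
  induction hf using Algebra.adjoin_induction with
  | mem g hg =>
    obtain ⟨x, rfl⟩ := hg
    exact fun m hm => N.lie_mem hm
  | algebraMap r => exact fun m hm => N.smul_mem r hm
  | add g h _ _ hg hh => exact fun m hm => N.add_mem (hg hm) (hh hm)
  | mul g h _ _ hg hh => exact hg.comp hh

theorem LieIdeal.mapsTo_toEnd_lcs_succ {I : LieIdeal R L} {x : L} (hx : x ∈ I) (k : ℕ) :
    Set.MapsTo (toEnd R L M x) (I.lcs M k) (I.lcs M (k + 1)) := fun _ hm => by
  rw [LieIdeal.lcs_succ]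
  exact LieSubmodule.lie_mem_lie hx hm

theorem LieIdeal.isNilpotent_mul_toEnd_of_mem_adjoin (I : LieIdeal R L) [IsNilpotent I M]
    {x : L} (hx : x ∈ I) {f : Module.End R M}
    (hf : f ∈ Algebra.adjoin R (Set.range (toEnd R L M))) :
    _root_.IsNilpotent (f * toEnd R L M x) := by
  obtain ⟨k, hk⟩ := IsNilpotent.nilpotent R I M
  have hlcs : I.lcs M k = ⊥ := by
    rw [← LieSubmodule.toSubmodule_inj, LieIdeal.coe_lcs_eq, hk]
    rfl
  have hpow : ∀ j, Set.MapsTo ⇑((f * toEnd R L M x) ^ j) Set.univ (I.lcs M j : Set M) := by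
    intro j
    induction j with
    | zero => simp
    | succ j ih =>
      rw [pow_succ', Module.End.coe_mul, Module.End.coe_mul]
      exact ((LieSubmodule.mapsTo_of_mem_adjoin_range_toEnd _ hf).comp
        (LieIdeal.mapsTo_toEnd_lcs_succ hx j)).comp ih
  refine ⟨k, LinearMap.ext fun m => ?_⟩
  simpa [hlcs] using hpow k (Set.mem_univ m)

end LieModule

section LieAlgebra

variable {R L : Type*} [CommRing R] [LieRing L] [LieAlgebra R L]

theorem LieIdeal.lcs_succ_le_map_lowerCentralSeries (I : LieIdeal R L) (k : ℕ) :
    LieSubmodule.toSubmodule (I.lcs L (k + 1)) ≤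
      (LieSubmodule.toSubmodule (lowerCentralSeries R I I k)).map
        (LieSubmodule.toSubmodule I).subtype := by
  induction k with
  | zero =>
    simpa [Submodule.range_subtype] using
      (LieSubmodule.toSubmodule_le_toSubmodule _ _).mpr (LieSubmodule.lie_le_left I ⊤)
  | succ k ih =>
    rw [LieIdeal.lcs_succ, LieSubmodule.lieIdeal_oper_eq_linear_span', Submodule.span_le]
    rintro _ ⟨x, hx, m, hm, rfl⟩
    obtain ⟨m₀, hm₀, rfl⟩ := ih hm
    refine ⟨⁅(⟨x, hx⟩ : I), m₀⁆, ?_, rfl⟩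
    rw [SetLike.mem_coe, LieSubmodule.mem_toSubmodule, lowerCentralSeries_succ]
    exact LieSubmodule.lie_mem_lie (LieSubmodule.mem_top _) hm₀

instance LieIdeal.isNilpotent_of_lieRing_isNilpotent (I : LieIdeal R L) [LieRing.IsNilpotent I] :
    IsNilpotent I L := by
  obtain ⟨k, hk⟩ := IsNilpotent.nilpotent R I I
  refine (isNilpotent_iff R I L).mpr ⟨k + 1, ?_⟩
  rw [← LieSubmodule.toSubmodule_inj, ← LieIdeal.coe_lcs_eq, LieSubmodule.bot_toSubmodule,
    ← le_bot_iff]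
  simpa [hk] using I.lcs_succ_le_map_lowerCentralSeries k

end LieAlgebra

/-- let `L` be a Lie algebra over a field `F` and `N` a nilpotent ideal of `L`.
Let `A` be the associative unital subalgebra of `End_F(L)` generated by `ad(L)`.  Then
`ad(N) ⊆ J(A)`, the Jacobson radical of `A`. -/
theorem ad_nilpotent_ideal_mem_jacobson
    (F L : Type*) [Field F] [LieRing L] [LieAlgebra F L]
    (N : LieIdeal F L) (hN : LieRing.IsNilpotent N)
    (A : Subalgebra F (Module.End F L))
    (hA : A = Algebra.adjoin F (Set.range fun a : L => (LieAlgebra.ad F L a : Module.End F L)))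
    (n : L) (hn : n ∈ N)
    (hmem : (LieAlgebra.ad F L n : Module.End F L) ∈ A) :
    (⟨LieAlgebra.ad F L n, hmem⟩ : A) ∈ (⊥ : Ideal A).jacobson := by
  subst hA
  refine Ideal.mem_jacobson_bot_of_forall_isNilpotent_mul fun y => ?_
  rw [← IsNilpotent.map_iff (f := Subalgebra.val _) Subtype.val_injective]
  exact N.isNilpotent_mul_toEnd_of_mem_adjoin hn y.2
end

section
/- Let H be a Hopf algebra over a field F, let L be an H-comodule Lie algebra, and let (V, ψ) be a symmetric (H,L)-module. Then the Chevalley–Eilenberg coboundary ∂ω of any H-colinear 1-cochain ω: L → V is an H-colinear 2-cochain, i.e., ∂(C̃¹(L;V)) ⊆ C̃²(L;V). -/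
open TensorProduct

noncomputable section

attribute [local instance 100] LieRing.ofAssociativeRing

/-- The bracket of a Lie algebra as a linear map on the tensor square. -/
def bracketHom (F L : Type*) [Field F] [LieRing L] [LieAlgebra F L] : L ⊗[F] L →ₗ[F] L :=
  TensorProduct.lift (LieAlgebra.ad F L).toLinearMap

/-- A right `H`-comodule structure on an `F`-vector space `V`. -/
structure HComodule (F H V : Type*) [Field F] [Ring H] [HopfAlgebra F H]
    [AddCommGroup V] [Module F V] where
  ρ : V →ₗ[F] V ⊗[F] H
  coassoc : ∀ x : V, (TensorProduct.assoc F V H H) ((ρ.rTensor H) (ρ x))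
      = ((Coalgebra.comul (R := F) (A := H)).lTensor V) (ρ x)
  counit : ∀ x : V,
    (TensorProduct.rid F V) (((Coalgebra.counit (R := F) (A := H)).lTensor V) (ρ x)) = x

/-- An `H`-comodule Lie algebra: a Lie algebra and right `H`-comodule `L` such that
`ρ⁅a,b⁆ = ⁅a₍₀₎,b₍₀₎⁆ ⊗ a₍₁₎b₍₁₎` (Sweedler notation). -/
structure HComoduleLieAlgebra (F H L : Type*) [Field F] [Ring H] [HopfAlgebra F H]
    [LieRing L] [LieAlgebra F L] extends HComodule F H L where
  compat : ∀ a b : L, ρ ⁅a, b⁆ =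
    (TensorProduct.map (bracketHom F L) (LinearMap.mul' F H))
      ((TensorProduct.tensorTensorTensorComm F L H L H) (ρ a ⊗ₜ[F] ρ b))

/-- A subspace `W` is an `H`-subcomodule if `ρ(W) ⊆ W ⊗ H`. -/
def HComodule.IsHSubcomodule {F H V : Type*} [Field F] [Ring H] [HopfAlgebra F H]
    [AddCommGroup V] [Module F V] (C : HComodule F H V) (W : Submodule F V) : Prop :=
  ∀ x ∈ W, C.ρ x ∈ LinearMap.range (W.subtype.rTensor H)

/-- `t ∈ H*` is a left integral on `H`: `t(a₍₂₎)a₍₁₎ = t(a)1`. -/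
def IsLeftIntegral (F H : Type*) [Field F] [Ring H] [HopfAlgebra F H]
    (t : H →ₗ[F] F) : Prop :=
  ∀ a : H, (TensorProduct.rid F H) ((t.lTensor H) (Coalgebra.comul (R := F) a)) = t a • (1 : H)

/-- `t ∈ H*` is ad-invariant: `t(a₍₁₎ b S(a₍₂₎)) = ε(a) t(b)`. -/
def IsAdInvariant (F H : Type*) [Field F] [Ring H] [HopfAlgebra F H]
    (t : H →ₗ[F] F) : Prop :=
  ∀ a b : H,
    t ((LinearMap.mul' F H)
        ((TensorProduct.map (LinearMap.mulRight F b) (HopfAlgebra.antipode (R := F)))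
          (Coalgebra.comul (R := F) a)))
      = Coalgebra.counit (R := F) a * t b

/-- An `(H,L)`-module over an `H`-comodule Lie algebra `L`: a representation
`ψ : L → gl(V)` on a right `H`-comodule `V` with `ρ_V(ψ(a)v) = ψ(a₍₀₎)v₍₀₎ ⊗ a₍₁₎v₍₁₎`. -/
structure HLModule (F H L V : Type*) [Field F] [Ring H] [HopfAlgebra F H]
    [LieRing L] [LieAlgebra F L] [AddCommGroup V] [Module F V]
    (C : HComoduleLieAlgebra F H L) extends HComodule F H V where
  ψ : L →ₗ⁅F⁆ Module.End F V
  compat : ∀ (a : L) (v : V),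
    ρ (ψ a v) =
      (TensorProduct.map (TensorProduct.lift ψ.toLinearMap) (LinearMap.mul' F H))
        ((TensorProduct.tensorTensorTensorComm F L H V H) (C.ρ a ⊗ₜ[F] ρ v))

/-- A symmetric `(H,L)`-module: additionally
`ψ(a₍₀₎)v₍₀₎ ⊗ a₍₁₎v₍₁₎ = ψ(a₍₀₎)v₍₀₎ ⊗ v₍₁₎a₍₁₎`. -/
def HLModule.IsSymmetric {F H L V : Type*} [Field F] [Ring H] [HopfAlgebra F H]
    [LieRing L] [LieAlgebra F L] [AddCommGroup V] [Module F V]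
    {C : HComoduleLieAlgebra F H L} (M : HLModule F H L V C) : Prop :=
  ∀ (a : L) (v : V),
    (TensorProduct.map (TensorProduct.lift M.ψ.toLinearMap) (LinearMap.mul' F H))
        ((TensorProduct.tensorTensorTensorComm F L H V H) (C.ρ a ⊗ₜ[F] M.ρ v)) =
      (TensorProduct.map (TensorProduct.lift M.ψ.toLinearMap)
          ((LinearMap.mul' F H) ∘ₗ (TensorProduct.comm F H H).toLinearMap))
        ((TensorProduct.tensorTensorTensorComm F L H V H) (C.ρ a ⊗ₜ[F] M.ρ v))

/-- A linear map `φ : V → W` of right `H`-comodules is `H`-colinear; for `φ : L → V` this is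
exactly the condition of being an `H`-colinear `1`-cochain. -/
def IsColinear {F H V W : Type*} [Field F] [Ring H] [HopfAlgebra F H]
    [AddCommGroup V] [Module F V] [AddCommGroup W] [Module F W]
    (CV : HComodule F H V) (CW : HComodule F H W) (φ : V →ₗ[F] W) : Prop :=
  ∀ v : V, CW.ρ (φ v) = (φ.rTensor H) (CV.ρ v)

/-- An `H`-colinear (alternating) `2`-cochain on `L` with values in `V`:
`ρ_V(d(a,b)) = d(a₍₀₎, b₍₀₎) ⊗ a₍₁₎b₍₁₎`. -/
def IsColinearTwoCochain {F H L V : Type*} [Field F] [Ring H] [HopfAlgebra F H]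
    [LieRing L] [LieAlgebra F L] [AddCommGroup V] [Module F V]
    (C : HComoduleLieAlgebra F H L) (M : HComodule F H V)
    (d : L →ₗ[F] L →ₗ[F] V) : Prop :=
  (∀ x : L, d x x = 0) ∧
    ∀ a b : L, M.ρ (d a b) =
      (TensorProduct.map (TensorProduct.lift d) (LinearMap.mul' F H))
        ((TensorProduct.tensorTensorTensorComm F L H L H) (C.ρ a ⊗ₜ[F] C.ρ b))

/-!
For a bilinear map `f`, write `f(a₍₀₎, b₍₀₎) ⊗ a₍₁₎b₍₁₎` as `sweedlerMul f (ρ a ⊗ ρ b)`; this is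
linear in `f`. Each of the three terms of `ρ_V(∂ω(a, b))` has this form: `ρ_V(ψ(a)ω(b))` by the
compatibility of `V` and colinearity of `ω`, `ρ_V(ω⁅a, b⁆)` by colinearity and the compatibility
of `L`, and `ρ_V(ψ(b)ω(a))` as well, but only because symmetry lets the coefficient `b₍₁₎a₍₁₎`
be replaced by `a₍₁₎b₍₁₎`. Adding them up gives `∂ω(a₍₀₎, b₍₀₎) ⊗ a₍₁₎b₍₁₎`.
-/

section SweedlerMul

variable {R H L L' W : Type*} [CommSemiring R] [Semiring H] [Algebra R H]
  [AddCommMonoid L] [Module R L] [AddCommMonoid L'] [Module R L']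
  [AddCommMonoid W] [Module R W]

variable (R H) in
def sweedlerMul (f : L →ₗ[R] L' →ₗ[R] W) : (L ⊗[R] H) ⊗[R] (L' ⊗[R] H) →ₗ[R] W ⊗[R] H :=
  TensorProduct.map (lift f) (LinearMap.mul' R H) ∘ₗ
    (TensorProduct.tensorTensorTensorComm R L H L' H).toLinearMap

theorem sweedlerMul_apply (f : L →ₗ[R] L' →ₗ[R] W) (p : L ⊗[R] H) (q : L' ⊗[R] H) :
    sweedlerMul R H f (p ⊗ₜ q) =
      TensorProduct.map (lift f) (LinearMap.mul' R H)
        (TensorProduct.tensorTensorTensorComm R L H L' H (p ⊗ₜ q)) := rfl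

@[simp]
theorem sweedlerMul_tmul (f : L →ₗ[R] L' →ₗ[R] W) (x : L) (h : H) (y : L') (k : H) :
    sweedlerMul R H f ((x ⊗ₜ h) ⊗ₜ (y ⊗ₜ k)) = f x y ⊗ₜ (h * k) := rfl

theorem rTensor_sweedlerMul {W' : Type*} [AddCommMonoid W'] [Module R W']
    (g : W →ₗ[R] W') (f : L →ₗ[R] L' →ₗ[R] W) (z : (L ⊗[R] H) ⊗[R] (L' ⊗[R] H)) :
    g.rTensor H (sweedlerMul R H f z) = sweedlerMul R H (f.compr₂ g) z := by
  rw [← LinearMap.comp_apply]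
  congr 1
  ext
  simp

theorem sweedlerMul_rTensor_left {K : Type*} [AddCommMonoid K] [Module R K]
    (f : L →ₗ[R] L' →ₗ[R] W) (g : K →ₗ[R] L) (p : K ⊗[R] H) (q : L' ⊗[R] H) :
    sweedlerMul R H f (g.rTensor H p ⊗ₜ q) = sweedlerMul R H (f ∘ₗ g) (p ⊗ₜ q) := by
  rw [← LinearMap.rTensor_tmul, ← LinearMap.comp_apply]
  congr 1
  ext
  simp

theorem sweedlerMul_rTensor_right {K : Type*} [AddCommMonoid K] [Module R K]
    (f : L →ₗ[R] L' →ₗ[R] W) (g : K →ₗ[R] L') (p : L ⊗[R] H) (q : K ⊗[R] H) :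
    sweedlerMul R H f (p ⊗ₜ g.rTensor H q) = sweedlerMul R H (f.compl₂ g) (p ⊗ₜ q) := by
  rw [← LinearMap.lTensor_tmul, ← LinearMap.comp_apply]
  congr 1
  ext
  simp

theorem sweedlerMul_flip (f : L →ₗ[R] L' →ₗ[R] W) (p : L' ⊗[R] H) (q : L ⊗[R] H) :
    sweedlerMul R H f.flip (p ⊗ₜ q) =
      TensorProduct.map (lift f) (LinearMap.mul' R H ∘ₗ (TensorProduct.comm R H H).toLinearMap)
        (TensorProduct.tensorTensorTensorComm R L H L' H (q ⊗ₜ p)) := by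
  have h : sweedlerMul R H f.flip =
      TensorProduct.map (lift f) (LinearMap.mul' R H ∘ₗ (TensorProduct.comm R H H).toLinearMap) ∘ₗ
        (TensorProduct.tensorTensorTensorComm R L H L' H).toLinearMap ∘ₗ
          (TensorProduct.comm R (L' ⊗[R] H) (L ⊗[R] H)).toLinearMap := by
    ext
    simp
  exact LinearMap.congr_fun h (p ⊗ₜ q)

end SweedlerMul

theorem sweedlerMul_sub {R H L L' W : Type*} [CommSemiring R] [Semiring H] [Algebra R H]
    [AddCommMonoid L] [Module R L] [AddCommMonoid L'] [Module R L'] [AddCommGroup W] [Module R W]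
    (f g : L →ₗ[R] L' →ₗ[R] W) :
    sweedlerMul R H (f - g) = sweedlerMul R H f - sweedlerMul R H g := by
  ext
  simp [TensorProduct.sub_tmul]

/-- for a symmetric `(H,L)`-module `(V,ψ)`, the Chevalley–Eilenberg coboundary
`(∂ω)(x,y) = ψ(x)ω(y) − ψ(y)ω(x) − ω(⁅x,y⁆)` of any `H`-colinear `1`-cochain `ω : L → V` is an
`H`-colinear `2`-cochain. -/
theorem coboundary_of_colinear_one_cochain_is_colinear
    (F H L V : Type*) [Field F] [Ring H] [HopfAlgebra F H]
    [LieRing L] [LieAlgebra F L] [AddCommGroup V] [Module F V]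
    (C : HComoduleLieAlgebra F H L) (M : HLModule F H L V C) (hM : M.IsSymmetric)
    (ω : L →ₗ[F] V) (hω : IsColinear C.toHComodule M.toHComodule ω)
    (d : L →ₗ[F] L →ₗ[F] V)
    (hd : ∀ x y : L, d x y = M.ψ x (ω y) - M.ψ y (ω x) - ω ⁅x, y⁆) :
    IsColinearTwoCochain C M.toHComodule d := by
  have hd' : d = (M.ψ : L →ₗ[F] Module.End F V).compl₂ ω -
      (M.ψ : L →ₗ[F] Module.End F V).flip ∘ₗ ω -
      ((LieAlgebra.ad F L : L →ₗ[F] Module.End F L)).compr₂ ω := by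
    ext x y
    simp [hd]
  refine ⟨fun x => by simp [hd], fun a b => ?_⟩
  rw [hd a b, map_sub, map_sub, M.compat a (ω b), M.compat b (ω a), hM b (ω a),
    hω a, hω b, hω ⁅a, b⁆, C.compat, bracketHom]
  simp only [← sweedlerMul_apply, ← sweedlerMul_flip]
  rw [sweedlerMul_rTensor_right, sweedlerMul_rTensor_left, rTensor_sweedlerMul, hd',
    sweedlerMul_sub, sweedlerMul_sub, LinearMap.sub_apply, LinearMap.sub_apply]
end
end

section
/- Let H be a Hopf algebra over a field F, let L be an H-module Lie algebra, and let M be an H-submodule of L. Then the centralizer N = {a ∈ L : [a,b] = 0 for all b ∈ M} of M in L is an H-submodule of L. -/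
open TensorProduct

noncomputable section

attribute [local instance 100] LieRing.ofAssociativeRing

/-- An `H`-module Lie algebra structure on `L`: a left `H`-module structure (given as an
`F`-algebra map `H →ₐ Module.End F L`) such that `h ⬝ ⁅a,b⁆ = ⁅h₍₁₎ ⬝ a, h₍₂₎ ⬝ b⁆`
(Sweedler notation for the comultiplication of `H`). -/
structure HModuleLieAlgebra (F H L : Type*) [Field F] [Ring H] [HopfAlgebra F H]
    [LieRing L] [LieAlgebra F L] where
  act : H →ₐ[F] Module.End F L
  compat : ∀ (h : H) (a b : L),
    act h ⁅a, b⁆ =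
      bracketHom F L
        ((TensorProduct.map (TensorProduct.lift act.toLinearMap)
            (TensorProduct.lift act.toLinearMap))
          ((TensorProduct.tensorTensorTensorComm F H H L L)
            (Coalgebra.comul (R := F) h ⊗ₜ[F] (a ⊗ₜ[F] b))))

/-- A subspace is an `H`-submodule if it is stable under the `H`-action. -/
def HModuleLieAlgebra.IsHSubmodule {F H L : Type*} [Field F] [Ring H] [HopfAlgebra F H]
    [LieRing L] [LieAlgebra F L] (S : HModuleLieAlgebra F H L) (W : Submodule F L) : Prop :=
  ∀ (h : H), ∀ x ∈ W, S.act h x ∈ W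

/-! With `σ` the antipode, Sweedler notation gives `⁅h ⬝ a, b⁆ = ∑ h₁ ⬝ ⁅a, σ(h₂) ⬝ b⁆`: expanding
the right-hand side by the compatibility axiom yields `∑ ⁅h₁ ⬝ a, h₂ σ(h₃) ⬝ b⁆ = ∑ ⁅h₁ ⬝ a, ε(h₂) b⁆`.
If `a` centralizes the `H`-stable subspace `M` and `b ∈ M`, every `σ(h₂) ⬝ b` lies in `M`, so each
term vanishes. -/

namespace HModuleLieAlgebra

variable {F H L : Type*} [Field F] [Ring H] [HopfAlgebra F H] [LieRing L] [LieAlgebra F L]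
  (S : HModuleLieAlgebra F H L)

open Coalgebra HopfAlgebra

theorem act_lie_eq_sum {h : H} {ι : Type*} (ρ : Repr F h ι) (a b : L) :
    S.act h ⁅a, b⁆ = ∑ i ∈ ρ.index, ⁅S.act (ρ.left i) a, S.act (ρ.right i) b⁆ := by
  simp [S.compat, bracketHom, ← ρ.eq, TensorProduct.sum_tmul, map_sum]

def orbit (a : L) : H →ₗ[F] L :=
  LinearMap.applyₗ a ∘ₗ S.act.toLinearMap

@[simp]
theorem orbit_apply (a : L) (h : H) : S.orbit a h = S.act h a := rfl

theorem lie_act_eq_sum (h : H) {ι : Type*} (ρ : Repr F h ι) (a b : L) :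
    ⁅S.act h a, b⁆ = ∑ i ∈ ρ.index, S.act (ρ.left i) ⁅a, S.act (antipode F (ρ.right i)) b⁆ := by
  let ρ₁ := fun i => ℛ F (ρ.left i)
  let ρ₂ := fun i => ℛ F (ρ.right i)
  symm
  -- Coassociativity and counitality are transported to `L` along
  -- `x ⊗ y ⊗ z ↦ ⁅x ⬝ a, (y σ(z)) ⬝ b⁆` and `x ⊗ c ↦ ⁅x ⬝ a, c b⁆`.
  calc ∑ i ∈ ρ.index, S.act (ρ.left i) ⁅a, S.act (antipode F (ρ.right i)) b⁆
      = ∑ i ∈ ρ.index, ∑ j ∈ (ρ₁ i).index,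
          ⁅S.act ((ρ₁ i).left j) a, S.act ((ρ₁ i).right j * antipode F (ρ.right i)) b⁆ := by
        simp [S.act_lie_eq_sum (ρ₁ _)]
    _ = ∑ i ∈ ρ.index, ∑ j ∈ (ρ₂ i).index,
          ⁅S.act (ρ.left i) a, S.act ((ρ₂ i).left j * antipode F ((ρ₂ i).right j)) b⁆ := by
        simpa [bracketHom, map_sum] using congr(bracketHom F L (TensorProduct.map (S.orbit a)
          (S.orbit b ∘ₗ LinearMap.mul' F H ∘ₗ (antipode F).lTensor H) $(sum_tmul_tmul_eq ρ ρ₁ ρ₂)))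
    _ = ∑ i ∈ ρ.index, ⁅S.act (ρ.left i) a, counit (R := F) (ρ.right i) • b⁆ := by
        refine Finset.sum_congr rfl fun i _ => ?_
        rw [← lie_sum, ← LinearMap.sum_apply, ← map_sum, sum_mul_antipode_eq_smul, map_smul,
          map_one, LinearMap.smul_apply, Module.End.one_apply]
    _ = ⁅S.act h a, b⁆ := by
        have := congr(bracketHom F L (TensorProduct.map (S.orbit a)
          (LinearMap.toSpanSingleton F L b) $(sum_tmul_counit_eq ρ)))
        simp only [bracketHom, map_sum, TensorProduct.map_tmul, TensorProduct.lift.tmul] at this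
        simpa using this

end HModuleLieAlgebra

/-- if `L` is an `H`-module Lie algebra and `M` is an `H`-submodule of `L`, then
the centralizer `N = {a ∈ L : ⁅a,b⁆ = 0 for all b ∈ M}` of `M` in `L` is an `H`-submodule. -/
theorem centralizer_is_H_submodule
    (F H L : Type*) [Field F] [Ring H] [HopfAlgebra F H]
    [LieRing L] [LieAlgebra F L]
    (S : HModuleLieAlgebra F H L) (M : Submodule F L) (hM : S.IsHSubmodule M)
    (N : Submodule F L) (hN : (N : Set L) = {a : L | ∀ b ∈ M, ⁅a, b⁆ = 0}) :
    S.IsHSubmodule N := by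
  intro h a ha
  rw [← SetLike.mem_coe, hN] at ha ⊢
  intro b hb
  rw [S.lie_act_eq_sum h (Coalgebra.Repr.arbitrary F h)]
  exact Finset.sum_eq_zero fun i _ => by rw [ha _ (hM _ b hb), map_zero]
end
end
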